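/- arXiv:2312.06138 — 2 statements merged into one kernel-verified Lean document; each statement's English description precedes it below -/
import Mathlib

section
/- For every N ≥ 2 and every 1 ≤ i ≤ N−1 the tensor Z_N(x;y) of the U_t(sl-hat_{n+1|m}) vertex model satisfies the exchange relations: Ř_i(x_{i+1}/x_i) Z_N(x;y) = Z_N(x_1,…,x_{i+1},x_i,…,x_N; y) Ř_{N+i}(x_{i+1}/x_i), and Z_N(x;y) Ř_i(y_i/y_{i+1}) = Ř_{N+i}(y_i/y_{i+1}) Z_N(x; y_1,…,y_{i+1},y_i,…,y_N). -/
open scoped BigOperators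

noncomputable section

namespace ConicVertex

/-- The field `ℚ(q,t,x_0,x_1,…)` of rational functions in countably many
algebraically independent indeterminates. -/
abbrev K : Type := FractionRing (MvPolynomial ℕ ℚ)

/-- The `i`-th indeterminate, viewed inside the fraction field. -/
def vr (i : ℕ) : K := algebraMap (MvPolynomial ℕ ℚ) K (MvPolynomial.X i)

/-- The Macdonald parameter `q`. -/
def qv : K := vr 0

/-- The Macdonald parameter `t`. -/
def tv : K := vr 1

/-- `ζ(u) = (1-qu)(1-t⁻¹u)/((1-u)(1-qt⁻¹u))`. -/
def zetaF (u : K) : K := ((1 - qv * u) * (1 - tv⁻¹ * u)) / ((1 - u) * (1 - qv * tv⁻¹ * u))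

/-- Functions of the variables `x_0, x_1, …` (a function of `k` variables only
reads the first `k` arguments). -/
abbrev SF : Type := (ℕ → K) → K

/-- The `a`-th smallest element of the finite set `S ⊆ ℕ`. -/
def sortedIdx (S : Finset ℕ) (a : ℕ) : ℕ := (S.sort (· ≤ ·)).getD a 0

/-- The shuffle product of a function `F` of `k` variables with a function `G`
of `l` variables:
`(F*G)(x_1…x_{k+l}) = Σ_{S, |S|=k} F(x_S) G(x_{Sᶜ}) Π_{i∈S,j∈Sᶜ} ζ(x_i/x_j)`. -/
def shuffleMul (k l : ℕ) (F G : SF) : SF := fun x =>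
  ∑ S ∈ Finset.powersetCard k (Finset.range (k + l)),
    F (fun a => x (sortedIdx S a)) *
      G (fun a => x (sortedIdx (Finset.range (k + l) \ S) a)) *
      ∏ i ∈ S, ∏ j ∈ Finset.range (k + l) \ S, zetaF (x i / x j)

/-- Iterated (left-to-right) shuffle product of a list of functions together
with their arities; returns the total arity and the product. -/
def shuffleListProd : List (ℕ × SF) → ℕ × SF
  | [] => (0, fun _ => 1)
  | (k, F) :: rest =>
      let p := shuffleListProd rest
      (k + p.1, shuffleMul k p.1 F p.2)

/-- The power-sum–like elements `S_k` of the shuffle algebra. -/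
def Sel (k : ℕ) : SF := fun x =>
  ((1 - qv) ^ k * (1 - tv⁻¹) ^ k / ((tv - qv) ^ k * (1 - (tv ^ k)⁻¹))) *
    ∑ σ : Equiv.Perm (Fin k),
      (fun y : ℕ → K =>
        ((∑ j ∈ Finset.range k, (qv / tv) ^ j * y j / y 0) /
            ∏ j ∈ Finset.range (k - 1), (1 - qv / tv * (y (j + 1) / y j))) *
          ∏ i ∈ Finset.range k, ∏ j ∈ Finset.range k,
            if i < j then zetaF (y i / y j) else 1)
        (fun a => if h : a < k then x (σ ⟨a, h⟩).val else x a)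

/-- The factorised elements `E_k(p)` of the shuffle algebra. -/
def Eel (p : K) (k : ℕ) : SF := fun x =>
  ∏ i ∈ Finset.range k, ∏ j ∈ Finset.range k,
    if i < j then
      ((x i - p * x j) * (x i - p⁻¹ * x j)) /
        ((x i - qv * tv⁻¹ * x j) * (x i - tv * qv⁻¹ * x j))
    else 1

/-- The Izergin-determinant elements `H_k(q_a)` (for the permutation `(a,b,c)`
of `(1,2,3)`). -/
def Hel (qa qb qc : K) (k : ℕ) : SF := fun x =>
  (qa * qv * tv⁻¹) ^ (k * (k - 1) / 2) *
    ((∏ i ∈ Finset.range k, ∏ j ∈ Finset.range k, ((x i - qb * x j) * (x j - qc * x i))) /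
        ∏ i ∈ Finset.range k, ∏ j ∈ Finset.range k,
          (if i = j then 1 else (x i - x j) * (x i - qv * tv⁻¹ * x j))) *
    Matrix.det (Matrix.of fun i j : Fin k =>
      1 / ((x i.val - qb * x j.val) * (x j.val - qc * x i.val)))

/-! ### The `U_t(sl-hat_{n+1|m})` vertex model

Colours are `0,…,n+m` (`d = n+m`); colours `1,…,n` are bosonic, colours
`n+1,…,n+m` fermionic, and colours are ordered `1 ≺ 2 ≺ ⋯ ≺ n+m ≺ 0`. -/

/-- Words of length `M` in the colours `0,…,d`, indexing the basis of `V^{⊗M}`. -/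
abbrev Word (d M : ℕ) := Fin M → Fin (d + 1)

/-- The position of a colour in the order `1 ≺ 2 ≺ ⋯ ≺ n+m ≺ 0`. -/
def ordC (d : ℕ) (a : Fin (d + 1)) : ℕ := if a.val = 0 then d + 1 else a.val

/-- Matrix elements of the `R`-check matrix `Ř(u)` on `V ⊗ V`:
`Rent n d u a b c e = ⟨a,b| Ř(u) |c,e⟩`. -/
def Rent (n d : ℕ) (u : K) (a b c e : Fin (d + 1)) : K :=
  if a = b ∧ b = c ∧ c = e then (if n < a.val then (u - tv) / (1 - tv * u) else 1)
  else if a = c ∧ b = e ∧ ordC d a < ordC d b then (1 - tv) / (1 - tv * u)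
  else if a = c ∧ b = e ∧ ordC d b < ordC d a then (1 - tv) * u / (1 - tv * u)
  else if a = e ∧ b = c ∧ ordC d a < ordC d b then tv * (1 - u) / (1 - tv * u)
  else if a = e ∧ b = c ∧ ordC d b < ordC d a then (1 - u) / (1 - tv * u)
  else 0

/-- `Ř_p(u)` acting on tensor factors `p, p+1` (0-based) of `V^{⊗M}`. -/
def Rop (n d M : ℕ) (p : ℕ) (u : K) : Matrix (Word d M) (Word d M) K :=
  Matrix.of fun α β =>
    if hp : p + 1 < M then
      if ∀ j : Fin M, j.val ≠ p → j.val ≠ p + 1 → α j = β j then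
        Rent n d u (α ⟨p, by omega⟩) (α ⟨p + 1, hp⟩) (β ⟨p, by omega⟩) (β ⟨p + 1, hp⟩)
      else 0
    else 0

/-- The column operator `C_b = Ř_{M+b-1}(x_M/y_b) ⋯ Ř_b(x_1/y_b)` (in 0-based
conventions) on `V^{⊗(M+Kc)}`. -/
def Cop (n d M Kc : ℕ) (x y : ℕ → K) (b : ℕ) :
    Matrix (Word d (M + Kc)) (Word d (M + Kc)) K :=
  (((List.range M).reverse).map fun a => Rop n d (M + Kc) (b + a) (x a / y b)).prod

/-- The rectangular lattice tensor `Z_{M,Kc}(x;y) = C_1 C_2 ⋯ C_{Kc}`. -/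
def Zop (n d M Kc : ℕ) (x y : ℕ → K) :
    Matrix (Word d (M + Kc)) (Word d (M + Kc)) K :=
  ((List.range Kc).map fun b => Cop n d M Kc x y b).prod

/-- `0^N ⊗ γ`. -/
def pad0 (d N : ℕ) (γ : Word d N) : Word d (N + N) := fun j =>
  if h : j.val < N then 0 else γ ⟨j.val - N, by have := j.isLt; omega⟩

/-- `⟨γ|W_N(x;y)|δ⟩ = ⟨0^N ⊗ γ| Z_N(x;y) |0^N ⊗ δ⟩`. -/
def Wop (n d N : ℕ) (x y : ℕ → K) : Matrix (Word d N) (Word d N) K :=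
  Matrix.of fun γ δ => Zop n d N N x y (pad0 d N γ) (pad0 d N δ)

/-- `W_N(x) = W_N(x_1,…,x_N; q x_1,…,q x_N)`. -/
def Wx (n d N : ℕ) (x : ℕ → K) : Matrix (Word d N) (Word d N) K :=
  Wop n d N x fun a => qv * x a

/-- The loop weights: `c_0 = z_0`, `c_j = z_j` for bosonic `j`, `c_{n+j} = -w_j`
for fermionic colours. -/
def coefZW (n : ℕ) (z w : ℕ → K) (a : ℕ) : K := if a ≤ n then z a else -w (a - n)

/-- The graded trace `T_N(x;z,w)`. -/
def Tfun (n m N : ℕ) (x z w : ℕ → K) : K :=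
  ∑ α : Word (n + m) N, (∏ i : Fin N, coefZW n z w (α i).val) * Wx n (n + m) N x α α

/-- Generic spectral parameters: `x_{a+1} := vr (2+a)` (0-based). -/
def xg (a : ℕ) : K := vr (2 + a)

/-- Generic column spectral parameters `y`. -/
def yg (N b : ℕ) : K := vr (2 + N + b)

/-- Generic bosonic weights `z_0,…,z_n`. -/
def zg (N j : ℕ) : K := vr (2 + N + j)

/-- Generic fermionic weights `w_1,…,w_m`. -/
def wg (N n j : ℕ) : K := vr (2 + N + n + 1 + j)

/-- Swap the values of `x` at `a` and `b`. -/
def swapF (x : ℕ → K) (a b : ℕ) : ℕ → K := fun c => if c = a then x b else if c = b then x a else x c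

end ConicVertex

/-!
Write `Ř(u) = a(u) • 1 + b(u) • T`, where `T` is the generator of the (super) Hecke algebra acting
on `V ⊗ V`. The quadratic relation `T² = (1 - t) T + t` and the braid relation `T₁ T₂ T₁ = T₂ T₁ T₂`
on `V ⊗ V ⊗ V` turn the Yang–Baxter equation `Ř₁(u) Ř₂(uv) Ř₁(v) = Ř₂(v) Ř₁(uv) Ř₂(u)` into a
single scalar identity between the coefficients `a, b`. Since `Ř_p` and `Ř_q` commute for
`|p - q| ≥ 2`, `Ř_i(x_{i+1}/x_i)` moves through each column `C_b` of `Z_N` by one Yang–Baxter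
move, which swaps `x_i, x_{i+1}` and shifts it one step right; after `N` columns it sits at
`N + i`. For the `y`-relation the two columns `C_i C_{i+1}` are interleaved row by row, and
`Ř_i(y_i/y_{i+1})` moves down through the `N` rows the same way. Genericity of the variables keeps
every denominator `1 - t u` nonzero.
-/

namespace ConicVertex

lemma ordC_injective (d : ℕ) : Function.Injective (ordC d) := by
  intro a b h
  unfold ordC at h
  have := a.isLt; have := b.isLt
  split_ifs at h <;> (apply Fin.ext; omega)

lemma ordC_cases {d : ℕ} (a b : Fin (d + 1)) :
    a = b ∨ (ordC d a < ordC d b ∧ ¬ ordC d b < ordC d a ∧ a ≠ b ∧ b ≠ a) ∨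
      (ordC d b < ordC d a ∧ ¬ ordC d a < ordC d b ∧ a ≠ b ∧ b ≠ a) := by
  rcases lt_trichotomy (ordC d a) (ordC d b) with h | h | h
  · exact .inr <| .inl ⟨h, lt_asymm h, fun e => by simp [e] at h, fun e => by simp [e] at h⟩
  · exact .inl (ordC_injective d h)
  · exact .inr <| .inr ⟨h, lt_asymm h, fun e => by simp [e] at h, fun e => by simp [e] at h⟩

abbrev Pair (d : ℕ) := Fin (d + 1) × Fin (d + 1)

abbrev Triple (d : ℕ) := Pair d × Fin (d + 1)

def heckeDiag (n d : ℕ) (a b : Fin (d + 1)) : K :=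
  if a = b then (if n < a.val then -tv else 1)
  else if ordC d a < ordC d b then 1 - tv else 0

def heckeSwap (d : ℕ) (a b : Fin (d + 1)) : K := if ordC d a < ordC d b then 1 else tv

def heckeMat (n d : ℕ) : Matrix (Pair d) (Pair d) K :=
  Matrix.of fun x y => heckeDiag n d x.1 x.2 * (if x = y then 1 else 0) +
    if x.1 = x.2 then 0 else heckeSwap d x.2 x.1 * (if x.swap = y then 1 else 0)

lemma heckeMat_mul_apply (n d : ℕ) {ι : Type*} (M : Matrix (Pair d) ι K) (x : Pair d) (w : ι) :
    (heckeMat n d * M) x w = heckeDiag n d x.1 x.2 * M x w +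
      if x.1 = x.2 then 0 else heckeSwap d x.2 x.1 * M x.swap w := by
  by_cases h : x.1 = x.2 <;>
    simp [Matrix.mul_apply, heckeMat, h, add_mul, ite_mul, Finset.sum_add_distrib]

lemma heckeMat_mul_self (n d : ℕ) :
    heckeMat n d * heckeMat n d =
      (1 - tv) • heckeMat n d + tv • (1 : Matrix (Pair d) (Pair d) K) := by
  ext ⟨a, b⟩ w
  rw [heckeMat_mul_apply]
  rcases ordC_cases a b with rfl | h | h
  · simp [heckeMat, heckeDiag, Matrix.one_apply]
    split_ifs <;> ring
  all_goals simp [heckeMat, heckeDiag, heckeSwap, Matrix.one_apply, h]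

def rCoeffId (u : K) : K := (1 - tv) * u / (1 - tv * u)

def rCoeffHecke (u : K) : K := (1 - u) / (1 - tv * u)

def rCheck (n d : ℕ) (u : K) : Matrix (Pair d) (Pair d) K :=
  Matrix.of fun x y => Rent n d u x.1 x.2 y.1 y.2

lemma rCheck_eq_baxterization (n d : ℕ) {u : K} (hu : 1 - tv * u ≠ 0) :
    rCheck n d u = rCoeffId u • 1 + rCoeffHecke u • heckeMat n d := by
  ext ⟨a, b⟩ ⟨c, e⟩
  simp only [rCheck, heckeMat, Rent, rCoeffId, rCoeffHecke, heckeDiag, heckeSwap, Matrix.of_apply,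
    Matrix.add_apply, Matrix.smul_apply, Matrix.one_apply, Prod.mk.injEq, Prod.swap_prod_mk,
    smul_eq_mul]
  rcases ordC_cases a b with rfl | h | h <;> grind

lemma baxterization_ybe {R A : Type*} [CommRing R] [Ring A] [Algebra R A] (t : R) {X Y : A}
    (hX : X * X = (1 - t) • X + t • 1) (hY : Y * Y = (1 - t) • Y + t • 1)
    (hXY : X * Y * X = Y * X * Y) {a₁ b₁ a₂ b₂ a₃ b₃ : R}
    (h : a₂ * (a₁ * b₃ + b₁ * a₃ + (1 - t) * b₁ * b₃) = a₁ * b₂ * a₃) :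
    (a₁ • 1 + b₁ • X) * (a₂ • 1 + b₂ • Y) * (a₃ • 1 + b₃ • X) =
      (a₃ • 1 + b₃ • Y) * (a₂ • 1 + b₂ • X) * (a₁ • 1 + b₁ • Y) := by
  simp only [mul_add, add_mul, smul_mul_assoc, mul_smul_comm, one_mul, mul_one]
  rw [hX, hY, hXY]
  simp only [smul_add, smul_smul]
  match_scalars <;> first | ring1 | linear_combination h | linear_combination -h

open scoped Kronecker in
def kroneckerOne (R ι κ : Type*) [CommSemiring R] [Fintype ι] [DecidableEq ι] [Fintype κ]
    [DecidableEq κ] : Matrix ι ι R →ₐ[R] Matrix (ι × κ) (ι × κ) R :=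
  AlgHom.ofLinearMap
    { toFun := fun A => A ⊗ₖ (1 : Matrix κ κ R)
      map_add' := fun A B => Matrix.add_kronecker A B 1
      map_smul' := fun r A => Matrix.smul_kronecker r A 1 }
    Matrix.one_kronecker_one fun A B => by
      simpa using Matrix.mul_kronecker_mul A B (1 : Matrix κ κ R) 1

lemma kroneckerOne_apply {R ι κ : Type*} [CommSemiring R] [Fintype ι] [DecidableEq ι] [Fintype κ]
    [DecidableEq κ] (A : Matrix ι ι R) (x y : ι × κ) :
    kroneckerOne R ι κ A x y = A x.1 y.1 * if x.2 = y.2 then 1 else 0 := by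
  simp [kroneckerOne, Matrix.one_apply]

def onFirstTwo (d : ℕ) : Matrix (Pair d) (Pair d) K →ₐ[K] Matrix (Triple d) (Triple d) K :=
  kroneckerOne _ _ _

-- `1 ⊗ A`, obtained from `A ⊗ 1` by relabelling `((b, c), a) ↦ ((a, b), c)`
def onLastTwo (d : ℕ) : Matrix (Pair d) (Pair d) K →ₐ[K] Matrix (Triple d) (Triple d) K :=
  (Matrix.reindexAlgEquiv K K
    ((Equiv.prodComm _ _).trans (Equiv.prodAssoc _ _ _).symm)).toAlgHom.comp (kroneckerOne _ _ _)

lemma onFirstTwo_apply (d : ℕ) (A : Matrix (Pair d) (Pair d) K) (x y : Triple d) :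
    onFirstTwo d A x y = A x.1 y.1 * if x.2 = y.2 then 1 else 0 :=
  kroneckerOne_apply A x y

lemma onLastTwo_apply (d : ℕ) (A : Matrix (Pair d) (Pair d) K) (x y : Triple d) :
    onLastTwo d A x y = A (x.1.2, x.2) (y.1.2, y.2) * if x.1.1 = y.1.1 then 1 else 0 := by
  simp [onLastTwo, kroneckerOne_apply]

lemma onFirstTwo_heckeMat_apply (n d : ℕ) (a b c : Fin (d + 1)) (w : Triple d) :
    onFirstTwo d (heckeMat n d) ((a, b), c) w =
      heckeDiag n d a b * (if ((a, b), c) = w then 1 else 0) +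
        if a = b then 0 else heckeSwap d b a * if ((b, a), c) = w then 1 else 0 := by
  obtain ⟨⟨a', b'⟩, c'⟩ := w
  simp only [onFirstTwo_apply, heckeMat, Matrix.of_apply, Prod.swap_prod_mk, Prod.mk.injEq]
  grind

lemma onLastTwo_heckeMat_apply (n d : ℕ) (a b c : Fin (d + 1)) (w : Triple d) :
    onLastTwo d (heckeMat n d) ((a, b), c) w =
      heckeDiag n d b c * (if ((a, b), c) = w then 1 else 0) +
        if b = c then 0 else heckeSwap d c b * if ((a, c), b) = w then 1 else 0 := by
  obtain ⟨⟨a', b'⟩, c'⟩ := w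
  simp only [onLastTwo_apply, heckeMat, Matrix.of_apply, Prod.swap_prod_mk, Prod.mk.injEq]
  grind

lemma onFirstTwo_heckeMat_mul_apply (n d : ℕ) (M : Matrix (Triple d) (Triple d) K)
    (a b c : Fin (d + 1)) (w : Triple d) :
    (onFirstTwo d (heckeMat n d) * M) ((a, b), c) w = heckeDiag n d a b * M ((a, b), c) w +
      if a = b then 0 else heckeSwap d b a * M ((b, a), c) w := by
  by_cases h : a = b <;>
    simp [Matrix.mul_apply, onFirstTwo_heckeMat_apply, h, add_mul, ite_mul, Finset.sum_add_distrib]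

lemma onLastTwo_heckeMat_mul_apply (n d : ℕ) (M : Matrix (Triple d) (Triple d) K)
    (a b c : Fin (d + 1)) (w : Triple d) :
    (onLastTwo d (heckeMat n d) * M) ((a, b), c) w = heckeDiag n d b c * M ((a, b), c) w +
      if b = c then 0 else heckeSwap d c b * M ((a, c), b) w := by
  by_cases h : b = c <;>
    simp [Matrix.mul_apply, onLastTwo_heckeMat_apply, h, add_mul, ite_mul, Finset.sum_add_distrib]

lemma map_heckeMat_mul_self (n d : ℕ)
    (f : Matrix (Pair d) (Pair d) K →ₐ[K] Matrix (Triple d) (Triple d) K) :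
    f (heckeMat n d) * f (heckeMat n d) = (1 - tv) • f (heckeMat n d) + tv • 1 := by
  rw [← map_mul, heckeMat_mul_self, map_add, map_smul, map_smul, map_one]

lemma heckeMat_braid (n d : ℕ) :
    onFirstTwo d (heckeMat n d) * onLastTwo d (heckeMat n d) * onFirstTwo d (heckeMat n d) =
      onLastTwo d (heckeMat n d) * onFirstTwo d (heckeMat n d) * onLastTwo d (heckeMat n d) := by
  ext ⟨⟨a, b⟩, c⟩ w
  -- the entries `1 x w` of the identity stay opaque, so only the order of `a, b, c` matters
  rw [← mul_one (_ * _ * onFirstTwo d _), ← mul_one (_ * _ * onLastTwo d _)]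
  simp only [mul_assoc, onFirstTwo_heckeMat_mul_apply, onLastTwo_heckeMat_mul_apply]
  unfold heckeDiag heckeSwap
  rcases ordC_cases a b with hab | hab | hab <;>
  rcases ordC_cases b c with hbc | hbc | hbc <;>
  rcases ordC_cases a c with hac | hac | hac <;>
  subst_vars <;>
  first
  | (exfalso; omega)
  | (simp only [*, if_true, if_false] <;> (try split_ifs) <;> ring)

lemma rCheck_ybe (n d : ℕ) {u₁ u₃ : K} (h₁ : 1 - tv * u₁ ≠ 0)
    (h₁₃ : 1 - tv * (u₁ * u₃) ≠ 0) (h₃ : 1 - tv * u₃ ≠ 0) :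
    onFirstTwo d (rCheck n d u₁) * onLastTwo d (rCheck n d (u₁ * u₃)) *
        onFirstTwo d (rCheck n d u₃) =
      onLastTwo d (rCheck n d u₃) * onFirstTwo d (rCheck n d (u₁ * u₃)) *
        onLastTwo d (rCheck n d u₁) := by
  simp only [rCheck_eq_baxterization n d h₁, rCheck_eq_baxterization n d h₁₃,
    rCheck_eq_baxterization n d h₃, map_add, map_smul, map_one]
  refine baxterization_ybe tv (map_heckeMat_mul_self n d _) (map_heckeMat_mul_self n d _)
    (heckeMat_braid n d) ?_
  unfold rCoeffId rCoeffHecke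
  field_simp
  ring

section Word
variable {n d M p q : ℕ}

lemma Rop_apply (u : K) (hp : p + 1 < M) (γ δ : Word d M) :
    Rop n d M p u γ δ = if ∀ j : Fin M, j.val ≠ p → j.val ≠ p + 1 → γ j = δ j then
      Rent n d u (γ ⟨p, by omega⟩) (γ ⟨p + 1, hp⟩) (δ ⟨p, by omega⟩) (δ ⟨p + 1, hp⟩) else 0 := by
  simp only [Rop, Matrix.of_apply, dif_pos hp]

lemma Rop_eq_zero (u : K) (hp : M ≤ p + 1) : Rop n d M p u = 0 := by
  ext γ δ
  simp [Rop, show ¬ p + 1 < M by omega]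

lemma Rop_mul_Rop_apply_of_far (u v : K) (hpq : p + 2 ≤ q ∨ q + 2 ≤ p)
    (hp : p + 1 < M) (hq : q + 1 < M) (γ δ : Word d M) :
    (Rop n d M p u * Rop n d M q v) γ δ =
      if ∀ j : Fin M, j.val ≠ p → j.val ≠ p + 1 → j.val ≠ q → j.val ≠ q + 1 → γ j = δ j then
        Rent n d u (γ ⟨p, by omega⟩) (γ ⟨p + 1, hp⟩) (δ ⟨p, by omega⟩) (δ ⟨p + 1, hp⟩) *
          Rent n d v (γ ⟨q, by omega⟩) (γ ⟨q + 1, hq⟩) (δ ⟨q, by omega⟩) (δ ⟨q + 1, hq⟩)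
      else 0 := by
  -- the only intermediate word: `δ` on the sites `p, p + 1` and `γ` elsewhere
  set ε₀ : Word d M := fun j => if j.val = p ∨ j.val = p + 1 then δ j else γ j
  rw [Matrix.mul_apply, Finset.sum_eq_single ε₀]
  · have hA : ∀ j : Fin M, j.val ≠ p → j.val ≠ p + 1 → γ j = ε₀ j := fun j h₀ h₁ => by
      simp [ε₀, h₀, h₁]
    have hBC : (∀ j : Fin M, j.val ≠ q → j.val ≠ q + 1 → ε₀ j = δ j) ↔
        ∀ j : Fin M, j.val ≠ p → j.val ≠ p + 1 → j.val ≠ q → j.val ≠ q + 1 → γ j = δ j := by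
      refine ⟨fun h j h₀ h₁ h₂ h₃ => by simpa [ε₀, h₀, h₁] using h j h₂ h₃, fun h j h₂ h₃ => ?_⟩
      by_cases hj : j.val = p ∨ j.val = p + 1
      · simp [ε₀, hj]
      · simp only [ε₀, if_neg hj]; exact h j (by omega) (by omega) h₂ h₃
    rw [Rop_apply u hp, Rop_apply v hq, if_pos hA]
    simp only [hBC]
    simp [ε₀, show q ≠ p by omega, show q ≠ p + 1 by omega, show q + 1 ≠ p by omega]
  · intro ε _ hε
    rw [Rop_apply u hp, Rop_apply v hq]
    split_ifs with h₁ h₂ <;> try simp only [mul_zero, zero_mul]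
    refine absurd (funext fun j => ?_) hε
    by_cases hj : j.val = p ∨ j.val = p + 1
    · simp only [ε₀, if_pos hj]; exact h₂ j (by omega) (by omega)
    · simp only [ε₀, if_neg hj]; exact (h₁ j (by omega) (by omega)).symm
  · simp

lemma Rop_commute_of_far (u v : K) (hpq : p + 2 ≤ q) :
    Commute (Rop n d M p u) (Rop n d M q v) := by
  obtain hq | hq := lt_or_ge (q + 1) M
  swap
  · rw [Rop_eq_zero v hq]; exact Commute.zero_right _
  ext γ δ
  rw [Rop_mul_Rop_apply_of_far u v (.inl hpq) (by omega) hq,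
    Rop_mul_Rop_apply_of_far v u (.inr hpq) hq (by omega)]
  refine if_congr ⟨fun h j h₀ h₁ h₂ h₃ => h j h₂ h₃ h₀ h₁, fun h j h₀ h₁ h₂ h₃ => h j h₂ h₃ h₀ h₁⟩
    (mul_comm _ _) rfl

abbrev OutsideWindow (M p : ℕ) := {j : Fin M // j.val < p ∨ p + 2 < j.val}

def windowEquiv (hp : p + 2 < M) : Word d M ≃ Triple d × (OutsideWindow M p → Fin (d + 1)) where
  toFun γ := (((γ ⟨p, by omega⟩, γ ⟨p + 1, by omega⟩), γ ⟨p + 2, hp⟩), fun j => γ j)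
  invFun x j :=
    if h : j.val < p ∨ p + 2 < j.val then x.2 ⟨j, h⟩
    else if j.val = p then x.1.1.1 else if j.val = p + 1 then x.1.1.2 else x.1.2
  left_inv γ := by
    funext j
    simp only
    split_ifs <;> congr 1 <;> ext <;> simp only <;> grind
  right_inv x := by
    obtain ⟨⟨⟨a, b⟩, c⟩, r⟩ := x
    simp only [Prod.mk.injEq]
    exact ⟨⟨⟨by simp, by simp⟩, by simp⟩, funext fun j => dif_pos j.2⟩

lemma windowEquiv_outside_eq_iff (hp : p + 2 < M) (γ δ : Word d M) :
    (windowEquiv hp γ).2 = (windowEquiv hp δ).2 ↔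
      ∀ j : Fin M, j.val < p ∨ p + 2 < j.val → γ j = δ j :=
  ⟨fun h j hj => congrFun h ⟨j, hj⟩, fun h => funext fun j => h j j.2⟩

lemma eq_off_pair_iff_windowEquiv (hp : p + 2 < M) (γ δ : Word d M) :
    (∀ j : Fin M, j.val ≠ p → j.val ≠ p + 1 → γ j = δ j) ↔
      γ ⟨p + 2, hp⟩ = δ ⟨p + 2, hp⟩ ∧ (windowEquiv hp γ).2 = (windowEquiv hp δ).2 := by
  rw [windowEquiv_outside_eq_iff]
  refine ⟨fun h => ⟨h _ (by simp) (by simp), fun j hj => h j (by omega) (by omega)⟩, ?_⟩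
  rintro ⟨h₂, h⟩ j hj₀ hj₁
  obtain rfl | hj₂ := eq_or_ne j ⟨p + 2, hp⟩
  · exact h₂
  · exact h j (by have := Fin.val_ne_of_ne hj₂; simp at this; omega)

lemma eq_off_succ_pair_iff_windowEquiv (hp : p + 2 < M) (γ δ : Word d M) :
    (∀ j : Fin M, j.val ≠ p + 1 → j.val ≠ p + 1 + 1 → γ j = δ j) ↔
      γ ⟨p, by omega⟩ = δ ⟨p, by omega⟩ ∧ (windowEquiv hp γ).2 = (windowEquiv hp δ).2 := by
  rw [windowEquiv_outside_eq_iff]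
  refine ⟨fun h => ⟨h _ (by simp) (by simp; omega), fun j hj => h j (by omega) (by omega)⟩, ?_⟩
  rintro ⟨h₀, h⟩ j hj₁ hj₂
  obtain rfl | hj₀ := eq_or_ne j ⟨p, by omega⟩
  · exact h₀
  · exact h j (by have := Fin.val_ne_of_ne hj₀; simp at this; omega)

def embed3 (hp : p + 2 < M) :
    Matrix (Triple d) (Triple d) K →ₐ[K] Matrix (Word d M) (Word d M) K :=
  (Matrix.reindexAlgEquiv K K (windowEquiv hp).symm).toAlgHom.comp (kroneckerOne _ _ _)

lemma embed3_apply (hp : p + 2 < M) (A : Matrix (Triple d) (Triple d) K) (γ δ : Word d M) :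
    embed3 hp A γ δ = A (windowEquiv hp γ).1 (windowEquiv hp δ).1 *
      if (windowEquiv hp γ).2 = (windowEquiv hp δ).2 then 1 else 0 := by
  simp [embed3, kroneckerOne_apply]

lemma Rop_eq_embed3_onFirstTwo (u : K) (hp : p + 2 < M) :
    Rop n d M p u = embed3 hp (onFirstTwo d (rCheck n d u)) := by
  ext γ δ
  rw [embed3_apply, onFirstTwo_apply, Rop_apply u (by omega)]
  simp only [eq_off_pair_iff_windowEquiv hp]
  split_ifs <;> simp_all [windowEquiv, rCheck]

lemma Rop_succ_eq_embed3_onLastTwo (u : K) (hp : p + 2 < M) :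
    Rop n d M (p + 1) u = embed3 hp (onLastTwo d (rCheck n d u)) := by
  ext γ δ
  rw [embed3_apply, onLastTwo_apply, Rop_apply u (by omega)]
  simp only [eq_off_succ_pair_iff_windowEquiv hp]
  split_ifs <;> simp_all [windowEquiv, rCheck]

lemma Rop_ybe {u₁ u₃ : K} (h₁ : 1 - tv * u₁ ≠ 0) (h₁₃ : 1 - tv * (u₁ * u₃) ≠ 0)
    (h₃ : 1 - tv * u₃ ≠ 0) :
    Rop n d M p u₁ * Rop n d M (p + 1) (u₁ * u₃) * Rop n d M p u₃ =
      Rop n d M (p + 1) u₃ * Rop n d M p (u₁ * u₃) * Rop n d M (p + 1) u₁ := by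
  obtain hp | hp := lt_or_ge (p + 2) M
  swap
  · simp [Rop_eq_zero _ hp]
  simp only [Rop_eq_embed3_onFirstTwo _ hp, Rop_succ_eq_embed3_onLastTwo _ hp, ← map_mul,
    rCheck_ybe n d h₁ h₁₃ h₃]

end Word

section Monoid
variable {G : Type*} [Monoid G]

lemma mul_prod_append_pair {l₁ l₂ : List G} {f g f' g' r r' : G}
    (h₁ : ∀ z ∈ l₁, Commute r z) (h₂ : ∀ z ∈ l₂, Commute r' z) (h : r * f * g = f' * g' * r') :
    r * (l₁ ++ f :: g :: l₂).prod = (l₁ ++ f' :: g' :: l₂).prod * r' := by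
  simp only [List.prod_append, List.prod_cons]
  calc r * (l₁.prod * (f * (g * l₂.prod))) = l₁.prod * ((r * f * g) * l₂.prod) := by
        rw [← mul_assoc, (Commute.list_prod_right _ _ h₁).eq]; simp only [mul_assoc]
    _ = l₁.prod * (f' * g' * (r' * l₂.prod)) := by rw [h, mul_assoc _ r']
    _ = l₁.prod * (f' * (g' * l₂.prod)) * r' := by
        rw [(Commute.list_prod_right _ _ h₂).eq]; simp only [mul_assoc]

lemma prod_append_pair_mul {l₁ l₂ : List G} {f g f' g' r r' : G}
    (h₁ : ∀ z ∈ l₁, Commute r' z) (h₂ : ∀ z ∈ l₂, Commute r z) (h : f * g * r = r' * f' * g') :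
    (l₁ ++ f :: g :: l₂).prod * r = r' * (l₁ ++ f' :: g' :: l₂).prod := by
  simp only [List.prod_append, List.prod_cons]
  calc l₁.prod * (f * (g * l₂.prod)) * r = l₁.prod * ((f * g * r) * l₂.prod) := by
        simp only [mul_assoc]; rw [← (Commute.list_prod_right _ _ h₂).eq]
    _ = (l₁.prod * r') * (f' * (g' * l₂.prod)) := by rw [h]; simp only [mul_assoc]
    _ = r' * (l₁.prod * (f' * (g' * l₂.prod))) := by
        rw [← (Commute.list_prod_right _ _ h₁).eq, mul_assoc]

lemma prod_map_reverse_range_mul_prod (F H : ℕ → G) :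
    ∀ L : ℕ, (∀ a a', a' < a → a < L → Commute (H a) (F a')) →
      ((List.range L).reverse.map F).prod * ((List.range L).reverse.map H).prod =
        ((List.range L).reverse.map fun a => F a * H a).prod
  | 0, _ => by simp
  | L + 1, hc => by
    have hH : Commute (H L) ((List.range L).reverse.map F).prod :=
      Commute.list_prod_right _ _ fun z hz => by
        obtain ⟨a, ha, rfl⟩ := List.mem_map.1 hz
        exact hc L a (List.mem_range.1 (List.mem_reverse.1 ha)) (by omega)
    simp only [List.range_succ, List.reverse_append, List.reverse_singleton, List.singleton_append,
      List.map_cons, List.prod_cons]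
    rw [← prod_map_reverse_range_mul_prod F H L fun a a' h h' => hc a a' h (by omega),
      mul_assoc, ← mul_assoc _ (H L), ← hH.eq]
    simp only [mul_assoc]

lemma prod_map_reverse_range_mul_of_intertwine (F F' R : ℕ → G) :
    ∀ L : ℕ, (∀ a < L, F a * R a = R (a + 1) * F' a) →
      ((List.range L).reverse.map F).prod * R 0 = R L * ((List.range L).reverse.map F').prod
  | 0, _ => by simp
  | L + 1, h => by
    simp only [List.range_succ, List.reverse_append, List.reverse_singleton, List.singleton_append,
      List.map_cons, List.prod_cons]
    rw [mul_assoc, prod_map_reverse_range_mul_of_intertwine F F' R L fun a ha => h a (by omega),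
      ← mul_assoc, h L (by omega), mul_assoc]

lemma mul_prod_map_range_of_intertwine (F F' R : ℕ → G) :
    ∀ L : ℕ, (∀ a < L, R a * F a = F' a * R (a + 1)) →
      R 0 * ((List.range L).map F).prod = ((List.range L).map F').prod * R L
  | 0, _ => by simp
  | L + 1, h => by
    simp only [List.range_succ, List.map_append, List.prod_append, List.map_singleton,
      List.prod_singleton]
    rw [← mul_assoc, mul_prod_map_range_of_intertwine F F' R L fun a ha => h a (by omega),
      mul_assoc, h L (by omega), mul_assoc]

end Monoid

lemma range_eq_append_pair {j M : ℕ} (hj : j + 2 ≤ M) :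
    List.range M = List.range j ++ j :: (j + 1) :: List.range' (j + 2) (M - (j + 2)) := by
  obtain ⟨k, rfl⟩ := Nat.exists_eq_add_of_le hj
  simp [List.range_add, List.range'_eq_map_range, List.range_succ]

lemma swapF_apply_left (x : ℕ → K) (a b : ℕ) : swapF x a b a = x b := by simp [swapF]

lemma swapF_apply_right (x : ℕ → K) {a b : ℕ} (h : a ≠ b) : swapF x a b b = x a := by
  simp [swapF, h.symm]

lemma swapF_apply_of_ne (x : ℕ → K) {a b c : ℕ} (ha : c ≠ a) (hb : c ≠ b) :
    swapF x a b c = x c := by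
  simp [swapF, ha, hb]

section Lattice
variable {n d M Kc : ℕ}

lemma Rop_commute_Cop (x y : ℕ → K) {p b : ℕ} (u : K) (h : p + 2 ≤ b ∨ b + M + 1 ≤ p) :
    Commute (Rop n d (M + Kc) p u) (Cop n d M Kc x y b) :=
  Commute.list_prod_right _ _ fun z hz => by
    obtain ⟨a, ha, rfl⟩ := List.mem_map.1 hz
    have := List.mem_range.1 (List.mem_reverse.1 ha)
    rcases h with h | h
    · exact Rop_commute_of_far _ _ (by omega)
    · exact (Rop_commute_of_far _ _ (by omega)).symm

lemma Rop_mul_Cop {x y : ℕ → K} {j b : ℕ} (hj : j + 2 ≤ M) (hx : x j ≠ 0)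
    (hxx : 1 - tv * (x (j + 1) / x j) ≠ 0) (hxy : ∀ a < M, 1 - tv * (x a / y b) ≠ 0) :
    Rop n d (M + Kc) (b + j) (x (j + 1) / x j) * Cop n d M Kc x y b =
      Cop n d M Kc (swapF x j (j + 1)) y b * Rop n d (M + Kc) (b + j + 1) (x (j + 1) / x j) := by
  have hout : ∀ a, a ≠ j → a ≠ j + 1 → Rop n d (M + Kc) (b + a) (swapF x j (j + 1) a / y b) =
      Rop n d (M + Kc) (b + a) (x a / y b) := fun a h₀ h₁ => by rw [swapF_apply_of_ne x h₀ h₁]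
  unfold Cop
  rw [range_eq_append_pair hj]
  simp only [List.reverse_append, List.reverse_cons, List.map_append, List.map_cons,
    List.append_assoc, List.cons_append, List.nil_append]
  rw [List.map_congr_left fun a ha => hout a
      (by have := List.mem_range'_1.1 (List.mem_reverse.1 ha); omega)
      (by have := List.mem_range'_1.1 (List.mem_reverse.1 ha); omega),
    List.map_congr_left fun a ha => hout a
      (by have := List.mem_range.1 (List.mem_reverse.1 ha); omega)
      (by have := List.mem_range.1 (List.mem_reverse.1 ha); omega),
    swapF_apply_left, swapF_apply_right x (by omega), ← Nat.add_assoc]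
  apply mul_prod_append_pair
  · simp only [List.mem_map, List.mem_reverse, List.mem_range'_1]
    rintro _ ⟨a, ha, rfl⟩
    exact Rop_commute_of_far _ _ (by omega)
  · simp only [List.mem_map, List.mem_reverse, List.mem_range]
    rintro _ ⟨a, ha, rfl⟩
    exact (Rop_commute_of_far _ _ (by omega)).symm
  · have hmul : x (j + 1) / x j * (x j / y b) = x (j + 1) / y b := div_mul_div_cancel₀ hx
    have := Rop_ybe (n := n) (d := d) (M := M + Kc) (p := b + j) hxx
      (by rw [hmul]; exact hxy (j + 1) (by omega)) (hxy j (by omega))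
    rwa [hmul] at this

lemma Rop_mul_Zop {x y : ℕ → K} {j : ℕ} (hj : j + 2 ≤ M) (hx : x j ≠ 0)
    (hxx : 1 - tv * (x (j + 1) / x j) ≠ 0) (hxy : ∀ a < M, ∀ b < Kc, 1 - tv * (x a / y b) ≠ 0) :
    Rop n d (M + Kc) j (x (j + 1) / x j) * Zop n d M Kc x y =
      Zop n d M Kc (swapF x j (j + 1)) y * Rop n d (M + Kc) (Kc + j) (x (j + 1) / x j) := by
  have := mul_prod_map_range_of_intertwine (Cop n d M Kc x y) (Cop n d M Kc (swapF x j (j + 1)) y)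
    (fun b => Rop n d (M + Kc) (b + j) (x (j + 1) / x j)) Kc fun b hb => by
      rw [Nat.add_right_comm]; exact Rop_mul_Cop hj hx hxx fun a ha => hxy a ha b hb
  simpa only [Zop, Nat.zero_add] using this

lemma Cop_mul_Cop_eq_prod (x y : ℕ → K) (b : ℕ) :
    Cop n d M Kc x y b * Cop n d M Kc x y (b + 1) =
      ((List.range M).reverse.map fun a => Rop n d (M + Kc) (b + a) (x a / y b) *
        Rop n d (M + Kc) (b + a + 1) (x a / y (b + 1))).prod := by
  unfold Cop
  simp only [Nat.add_right_comm b 1]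
  exact prod_map_reverse_range_mul_prod _ _ M fun a a' h _ =>
    (Rop_commute_of_far _ _ (by omega)).symm

lemma Cop_mul_Cop_mul_Rop {x y : ℕ → K} {j : ℕ} (hj : j + 2 ≤ Kc) (hy : y j ≠ 0)
    (hyy : 1 - tv * (y j / y (j + 1)) ≠ 0) (hxy : ∀ a < M, ∀ b < Kc, 1 - tv * (x a / y b) ≠ 0) :
    Cop n d M Kc x y j * Cop n d M Kc x y (j + 1) * Rop n d (M + Kc) j (y j / y (j + 1)) =
      Rop n d (M + Kc) (M + j) (y j / y (j + 1)) *
        (Cop n d M Kc x (swapF y j (j + 1)) j * Cop n d M Kc x (swapF y j (j + 1)) (j + 1)) := by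
  rw [Cop_mul_Cop_eq_prod, Cop_mul_Cop_eq_prod, swapF_apply_left, swapF_apply_right y (by omega),
    Nat.add_comm M j]
  refine prod_map_reverse_range_mul_of_intertwine _ _ (fun a => Rop n d (M + Kc) (j + a) _) M
    fun a ha => ?_
  have hmul : x a / y j * (y j / y (j + 1)) = x a / y (j + 1) := div_mul_div_cancel₀ hy
  have := Rop_ybe (n := n) (d := d) (M := M + Kc) (p := j + a) (hxy a ha j (by omega))
    (by rw [hmul]; exact hxy a ha (j + 1) hj) hyy
  rw [hmul] at this
  rw [← Nat.add_assoc]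
  simpa only [mul_assoc] using this

lemma Cop_swapF_of_ne (x y : ℕ → K) {j b : ℕ} (h₀ : b ≠ j) (h₁ : b ≠ j + 1) :
    Cop n d M Kc x (swapF y j (j + 1)) b = Cop n d M Kc x y b := by
  simp only [Cop, swapF_apply_of_ne y h₀ h₁]

lemma Zop_mul_Rop {x y : ℕ → K} {j : ℕ} (hj : j + 2 ≤ Kc) (hy : y j ≠ 0)
    (hyy : 1 - tv * (y j / y (j + 1)) ≠ 0) (hxy : ∀ a < M, ∀ b < Kc, 1 - tv * (x a / y b) ≠ 0) :
    Zop n d M Kc x y * Rop n d (M + Kc) j (y j / y (j + 1)) =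
      Rop n d (M + Kc) (M + j) (y j / y (j + 1)) * Zop n d M Kc x (swapF y j (j + 1)) := by
  unfold Zop
  rw [range_eq_append_pair hj]
  simp only [List.map_append, List.map_cons]
  rw [List.map_congr_left fun b hb => Cop_swapF_of_ne x y (n := n) (d := d) (M := M) (Kc := Kc)
      (List.mem_range.1 hb).ne (by have := List.mem_range.1 hb; omega),
    List.map_congr_left fun b hb => Cop_swapF_of_ne x y (n := n) (d := d) (M := M) (Kc := Kc)
      (by have := List.mem_range'_1.1 hb; omega) (by have := List.mem_range'_1.1 hb; omega)]
  refine prod_append_pair_mul ?_ ?_ (by rw [Cop_mul_Cop_mul_Rop hj hy hyy hxy, mul_assoc])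
  · simp only [List.mem_map, List.mem_range]
    rintro _ ⟨b, hb, rfl⟩
    exact Rop_commute_Cop x y _ (.inr (by omega))
  · simp only [List.mem_map, List.mem_range'_1]
    rintro _ ⟨b, hb, rfl⟩
    exact Rop_commute_Cop x y _ (.inl (by omega))

end Lattice

lemma vr_ne_zero (i : ℕ) : vr i ≠ 0 :=
  (IsFractionRing.injective (MvPolynomial ℕ ℚ) K).ne (MvPolynomial.X_ne_zero i) |>.trans_eq
    (map_zero _)

lemma one_sub_tv_mul_vr_div_ne_zero (i j : ℕ) : 1 - tv * (vr i / vr j) ≠ 0 := by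
  have hpoly : (MvPolynomial.X j - MvPolynomial.X 1 * MvPolynomial.X i : MvPolynomial ℕ ℚ) ≠ 0 :=
    fun h => by
      have := congrArg (MvPolynomial.eval fun _ => (2 : ℚ)) h
      norm_num at this
  have hK : vr j - tv * vr i ≠ 0 := by
    have := (IsFractionRing.injective (MvPolynomial ℕ ℚ) K).ne hpoly
    rwa [map_sub, map_mul, map_zero] at this
  rw [← mul_div_assoc, one_sub_div (vr_ne_zero j)]
  exact div_ne_zero hK (vr_ne_zero j)

theorem statement9_general (N n m : ℕ)
    (i : ℕ) (h1 : 1 ≤ i) (hi : i ≤ N - 1) :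
    Rop n (n + m) (N + N) (i - 1) (xg i / xg (i - 1)) * Zop n (n + m) N N xg (yg N) =
        Zop n (n + m) N N (swapF xg (i - 1) i) (yg N) *
          Rop n (n + m) (N + N) (N + i - 1) (xg i / xg (i - 1)) ∧
      Zop n (n + m) N N xg (yg N) * Rop n (n + m) (N + N) (i - 1) (yg N (i - 1) / yg N i) =
        Rop n (n + m) (N + N) (N + i - 1) (yg N (i - 1) / yg N i) *
          Zop n (n + m) N N xg (swapF (yg N) (i - 1) i) := by
  obtain ⟨j, rfl⟩ : ∃ j, i = j + 1 := ⟨i - 1, by omega⟩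
  have hj : j + 2 ≤ N := by omega
  have hxy : ∀ a < N, ∀ b < N, 1 - tv * (xg a / yg N b) ≠ 0 :=
    fun _ _ _ _ => one_sub_tv_mul_vr_div_ne_zero _ _
  rw [Nat.add_sub_cancel, show N + (j + 1) - 1 = N + j by omega]
  exact ⟨Rop_mul_Zop hj (vr_ne_zero _) (one_sub_tv_mul_vr_div_ne_zero _ _) hxy,
    Zop_mul_Rop hj (vr_ne_zero _) (one_sub_tv_mul_vr_div_ne_zero _ _) hxy⟩

/-- Exchange relations for `Z_N(x;y)` (paper's `Ř_i` acting on
factors `i,i+1` in 1-based conventions is `Rop` at 0-based position `i-1`):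
`Ř_i(x_{i+1}/x_i) Z_N(x;y) = Z_N(…x_{i+1},x_i…;y) Ř_{N+i}(x_{i+1}/x_i)` and
`Z_N(x;y) Ř_i(y_i/y_{i+1}) = Ř_{N+i}(y_i/y_{i+1}) Z_N(x;…y_{i+1},y_i…)`. -/
theorem statement9 (N n m : ℕ) (hN : 2 ≤ N) (hnm : 1 ≤ n + m)
    (i : ℕ) (h1 : 1 ≤ i) (hi : i ≤ N - 1) :
    Rop n (n + m) (N + N) (i - 1) (xg i / xg (i - 1)) * Zop n (n + m) N N xg (yg N) =
        Zop n (n + m) N N (swapF xg (i - 1) i) (yg N) *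
          Rop n (n + m) (N + N) (N + i - 1) (xg i / xg (i - 1)) ∧
      Zop n (n + m) N N xg (yg N) * Rop n (n + m) (N + N) (i - 1) (yg N (i - 1) / yg N i) =
        Rop n (n + m) (N + N) (N + i - 1) (yg N (i - 1) / yg N i) *
          Zop n (n + m) N N xg (swapF (yg N) (i - 1) i) :=
  statement9_general N n m i h1 hi

end ConicVertex
end
end

section
/- Let μ/ν be a skew Young diagram that is a vertical strip (at most one box in each row) with k ≥ 1 boxes, and let χ_1,…,χ_k ∈ Q(q,t) be the contents of its boxes in any order. Then the rational function E_k(q) ∈ Q(q,t)(x_1,…,x_k) is regular at (x_1,…,x_k) = (χ_1,…,χ_k), and its value there is E_k(q)(χ_1,…,χ_k) = t^{−k(k−1)/2} ((1−q t^{−1})^k/(1−q)^k) · ∏_{(□,□')} (1 − q χ_{□'}/χ_□)/(1 − q t^{−1} χ_{□'}/χ_□), where the product runs over all ordered pairs (□,□') of boxes of μ/ν, including the pairs with □ = □'. -/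
open scoped BigOperators

noncomputable section

namespace SkewEval

/-- The field `F₀ = ℚ(q,t)`. -/
abbrev F0 : Type := FractionRing (MvPolynomial (Fin 2) ℚ)

/-- The parameter `q`. -/
def qv : F0 := algebraMap (MvPolynomial (Fin 2) ℚ) F0 (MvPolynomial.X 0)

/-- The parameter `t`. -/
def tv : F0 := algebraMap (MvPolynomial (Fin 2) ℚ) F0 (MvPolynomial.X 1)

/-- The defining formula of `E_k(q)`, as a function on `F₀^k`. -/
def Eval' (k : ℕ) (v : Fin k → F0) : F0 :=
  ∏ i : Fin k, ∏ j : Fin k,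
    if i < j then
      ((v i - qv * v j) * (v i - qv⁻¹ * v j)) /
        ((v i - qv * tv⁻¹ * v j) * (v i - tv * qv⁻¹ * v j))
    else 1

/-- The denominator of the defining formula of `E_k(q)`. -/
def Eden (k : ℕ) (v : Fin k → F0) : F0 :=
  ∏ i : Fin k, ∏ j : Fin k,
    if i < j then (v i - qv * tv⁻¹ * v j) * (v i - tv * qv⁻¹ * v j) else 1

lemma qv_ne : qv ≠ 0 := by
  simp only [qv, ne_eq, map_eq_zero_iff _ (IsFractionRing.injective (MvPolynomial (Fin 2) ℚ) F0)]
  exact MvPolynomial.X_ne_zero 0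

lemma tv_ne : tv ≠ 0 := by
  simp only [tv, ne_eq, map_eq_zero_iff _ (IsFractionRing.injective (MvPolynomial (Fin 2) ℚ) F0)]
  exact MvPolynomial.X_ne_zero 1

lemma mono_nat {a b c d : ℕ} (h : qv ^ a * tv ^ b = qv ^ c * tv ^ d) : a = c ∧ b = d := by
  have h' : (MvPolynomial.X 0 ^ a * MvPolynomial.X 1 ^ b : MvPolynomial (Fin 2) ℚ)
      = MvPolynomial.X 0 ^ c * MvPolynomial.X 1 ^ d := by
    apply IsFractionRing.injective (MvPolynomial (Fin 2) ℚ) F0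
    simpa [qv, tv, map_mul, map_pow] using h
  have h0 := congrArg (MvPolynomial.eval (fun i : Fin 2 => if i = 0 then (2:ℚ) else 1)) h'
  have h1 := congrArg (MvPolynomial.eval (fun i : Fin 2 => if i = 0 then (1:ℚ) else 2)) h'
  simp [MvPolynomial.eval_X] at h0 h1
  exact ⟨h0, h1⟩

lemma mono_int {m n m' n' : ℤ} (h : qv ^ m * tv ^ n = qv ^ m' * tv ^ n') : m = m' ∧ n = n' := by
  set N : ℤ := ((m.natAbs + n.natAbs + m'.natAbs + n'.natAbs : ℕ) : ℤ) with hNdef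
  have hm : 0 ≤ m + N := by simp only [hNdef]; omega
  have hn : 0 ≤ n + N := by simp only [hNdef]; omega
  have hm' : 0 ≤ m' + N := by simp only [hNdef]; omega
  have hn' : 0 ≤ n' + N := by simp only [hNdef]; omega
  have key : qv ^ (m + N) * tv ^ (n + N) = qv ^ (m' + N) * tv ^ (n' + N) := by
    rw [zpow_add₀ qv_ne, zpow_add₀ tv_ne, zpow_add₀ qv_ne, zpow_add₀ tv_ne]
    calc qv ^ m * qv ^ (N:ℤ) * (tv ^ n * tv ^ (N:ℤ))
        = (qv ^ m * tv ^ n) * (qv ^ (N:ℤ) * tv ^ (N:ℤ)) := by ring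
      _ = (qv ^ m' * tv ^ n') * (qv ^ (N:ℤ) * tv ^ (N:ℤ)) := by rw [h]
      _ = qv ^ m' * qv ^ (N:ℤ) * (tv ^ n' * tv ^ (N:ℤ)) := by ring
  have key2 : qv ^ (m + N).toNat * tv ^ (n + N).toNat
      = qv ^ (m' + N).toNat * tv ^ (n' + N).toNat := by
    rw [← zpow_natCast qv, ← zpow_natCast tv, ← zpow_natCast qv, ← zpow_natCast tv,
      Int.toNat_of_nonneg hm, Int.toNat_of_nonneg hn, Int.toNat_of_nonneg hm',
      Int.toNat_of_nonneg hn']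
    exact key
  obtain ⟨h1, h2⟩ := mono_nat key2
  omega

lemma prod_square {M : Type*} [CommMonoid M] {k : ℕ} (F : Fin k → Fin k → M) :
    (∏ i, ∏ j, F i j) = (∏ i, F i i) * ∏ i, ∏ j, (if i < j then F i j * F j i else 1) := by
  have h1 : ∀ i j : Fin k, F i j
      = (if i = j then F i j else 1) *
        ((if i < j then F i j else 1) * (if j < i then F i j else 1)) := by
    intro i j
    rcases lt_trichotomy i j with h | h | h
    · simp [h, h.ne, asymm h]
    · simp [h]
    · simp [h, h.ne', asymm h]
  calc (∏ i, ∏ j, F i j)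
      = ∏ i, ∏ j, ((if i = j then F i j else 1) *
          ((if i < j then F i j else 1) * (if j < i then F i j else 1))) :=
        Finset.prod_congr rfl fun i _ => Finset.prod_congr rfl fun j _ => h1 i j
    _ = (∏ i, ∏ j, if i = j then F i j else 1) *
          ((∏ i, ∏ j, if i < j then F i j else 1) * (∏ i, ∏ j, if j < i then F i j else 1)) := by
        simp only [Finset.prod_mul_distrib]
    _ = (∏ i, F i i) *
          ((∏ i, ∏ j, if i < j then F i j else 1) * (∏ i, ∏ j, if i < j then F j i else 1)) := by
        rw [Finset.prod_comm (f := fun i j => if j < i then F i j else 1)]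
        simp
    _ = (∏ i, F i i) * ∏ i, ∏ j, (if i < j then F i j * F j i else 1) := by
        rw [← Finset.prod_mul_distrib]
        congr 1
        refine Finset.prod_congr rfl fun i _ => ?_
        rw [← Finset.prod_mul_distrib]
        refine Finset.prod_congr rfl fun j _ => ?_
        split_ifs <;> simp

lemma prod_const_lt {M : Type*} [CommMonoid M] (k : ℕ) (c : M) :
    (∏ i : Fin k, ∏ j : Fin k, if i < j then c else 1) = c ^ (k * (k - 1) / 2) := by
  rw [Finset.prod_comm]
  have h1 : ∀ j : Fin k, (∏ i : Fin k, if i < j then c else 1) = c ^ (j : ℕ) := by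
    intro j
    rw [Finset.prod_ite, Finset.prod_const, Finset.prod_const_one, mul_one]
    congr 1
    rw [show (Finset.univ.filter (fun i : Fin k => i < j)) = Finset.Iio j by ext x; simp,
      Fin.card_Iio]
  calc (∏ j : Fin k, ∏ i : Fin k, if i < j then c else 1) = ∏ j : Fin k, c ^ (j : ℕ) :=
        Finset.prod_congr rfl fun j _ => h1 j
    _ = c ^ (∑ j : Fin k, (j : ℕ)) := by rw [Finset.prod_pow_eq_pow_sum]
    _ = c ^ (k * (k - 1) / 2) := by rw [Fin.sum_univ_eq_sum_range (fun i => i) k,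
          Finset.sum_range_id]

lemma key_term {F : Type*} [Field F] (q t x y : F) (hq : q ≠ 0) (ht : t ≠ 0)
    (hx : x ≠ 0) (hy : y ≠ 0)
    (h1 : x - q * t⁻¹ * y ≠ 0) (h2 : x - t * q⁻¹ * y ≠ 0) :
    ((x - q * y) * (x - q⁻¹ * y)) / ((x - q * t⁻¹ * y) * (x - t * q⁻¹ * y)) =
      t⁻¹ * ((1 - q * (y / x)) / (1 - q * t⁻¹ * (y / x)) *
        ((1 - q * (x / y)) / (1 - q * t⁻¹ * (x / y)))) := by
  have h2'' : y - q * t⁻¹ * x ≠ 0 := by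
    intro h
    apply h2
    have h3 : -(t * q⁻¹) * (y - q * t⁻¹ * x) = 0 := by rw [h, mul_zero]
    rw [← h3]
    field_simp
    ring
  have e1 : 1 - q * (y / x) = (x - q * y) / x := by field_simp
  have e2 : 1 - q * t⁻¹ * (y / x) = (x - q * t⁻¹ * y) / x := by field_simp
  have e3 : 1 - q * (x / y) = (y - q * x) / y := by field_simp
  have e4 : 1 - q * t⁻¹ * (x / y) = (y - q * t⁻¹ * x) / y := by field_simp
  have e5 : t⁻¹ * ((x - q * y) * (y - q * x) / ((x - q * t⁻¹ * y) * (y - q * t⁻¹ * x)))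
      = (x - q * y) * (y - q * x) / (t * ((x - q * t⁻¹ * y) * (y - q * t⁻¹ * x))) := by
    rw [inv_mul_eq_div, div_div, mul_comm ((x - q * t⁻¹ * y) * (y - q * t⁻¹ * x)) t]
  rw [e1, e2, e3, e4, div_div_div_cancel_right₀ hx, div_div_div_cancel_right₀ hy,
    div_mul_div_comm, e5,
    div_eq_div_iff (mul_ne_zero h1 h2) (mul_ne_zero ht (mul_ne_zero h1 h2''))]
  field_simp
  ring

set_option maxHeartbeats 2000000 in
set_option synthInstance.maxHeartbeats 200000 in
/-- Let `μ/ν` be a skew diagram (η, μ antitone with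
`ν ⊆ μ`) which is a vertical strip, with boxes enumerated (in any order) by
`e : Fin k → ℕ × ℕ` (column, row), `k ≥ 1`, and let `χ_i = q^{a_i-1} t^{1-b_i}`
be the contents of its boxes.  Then the rational function `E_k(q)` is regular
at `(x_1,…,x_k) = (χ_1,…,χ_k)` — i.e. it can be written as `f/g` with
`g(χ) ≠ 0` — and its value there is
`t^{-k(k-1)/2} ((1-qt⁻¹)^k/(1-q)^k) Π_{□,□'} (1-qχ_{□'}/χ_□)/(1-qt⁻¹χ_{□'}/χ_□)`,
the product running over all ordered pairs of boxes. -/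
theorem statement18 (k : ℕ) (hk : 1 ≤ k) (μ ν : ℕ → ℕ)
    (hμ : ∀ b b', b ≤ b' → μ b' ≤ μ b) (hν : ∀ b b', b ≤ b' → ν b' ≤ ν b)
    (hsub : ∀ b, ν b ≤ μ b) (hvert : ∀ b, μ b ≤ ν b + 1)
    (e : Fin k → ℕ × ℕ) (hinj : Function.Injective e)
    (hbox : ∀ i, 1 ≤ (e i).2 ∧ ν (e i).2 < (e i).1 ∧ (e i).1 ≤ μ (e i).2)
    (hsurj : ∀ a b : ℕ, 1 ≤ b → ν b < a → a ≤ μ b → ∃ i, e i = (a, b))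
    (χ : Fin k → F0)
    (hχ : ∀ i, χ i = qv ^ (((e i).1 : ℤ) - 1) * tv ^ ((1 : ℤ) - ((e i).2 : ℤ))) :
    ∃ f g : MvPolynomial (Fin k) F0,
      (∀ v : Fin k → F0, Eden k v ≠ 0 →
          Eval' k v * MvPolynomial.eval v g = MvPolynomial.eval v f) ∧
      MvPolynomial.eval χ g ≠ 0 ∧
      MvPolynomial.eval χ f / MvPolynomial.eval χ g =
        (tv ^ (k * (k - 1) / 2))⁻¹ * ((1 - qv * tv⁻¹) ^ k / (1 - qv) ^ k) *
          ∏ i : Fin k, ∏ j : Fin k,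
            (1 - qv * (χ j / χ i)) / (1 - qv * tv⁻¹ * (χ j / χ i)) := by
  classical
  -- basic nonvanishing facts
  have hχ0 : ∀ i, χ i ≠ 0 := fun i => by
    rw [hχ i]; exact mul_ne_zero (zpow_ne_zero _ qv_ne) (zpow_ne_zero _ tv_ne)
  have hne : ∀ i j, χ i ≠ qv * tv⁻¹ * χ j := by
    intro i j h
    rw [hχ i, hχ j] at h
    have h' : qv ^ (((e i).1 : ℤ) - 1) * tv ^ ((1:ℤ) - ((e i).2:ℤ))
        = qv ^ ((((e j).1 : ℤ) - 1) + 1) * tv ^ (((1:ℤ) - ((e j).2:ℤ)) + (-1)) := by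
      rw [h, zpow_add₀ qv_ne, zpow_add₀ tv_ne, zpow_one, zpow_neg_one]
      ring
    obtain ⟨ha, hb⟩ := mono_int h'
    have ha' : (e i).1 = (e j).1 + 1 := by omega
    have hb' : (e i).2 = (e j).2 + 1 := by omega
    obtain ⟨hb1, hν1, hμ1⟩ := hbox i
    obtain ⟨hb2, hν2, hμ2⟩ := hbox j
    have hmm := hμ (e j).2 ((e j).2 + 1) (Nat.le_succ _)
    have hvv := hvert (e j).2
    rw [ha', hb'] at hμ1
    omega
  have hg1 : ∀ i j, χ i - qv * tv⁻¹ * χ j ≠ 0 := fun i j => sub_ne_zero.mpr (hne i j)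
  have hg2 : ∀ i j, χ i - tv * qv⁻¹ * χ j ≠ 0 := by
    intro i j h
    apply hne j i
    rw [sub_eq_zero] at h
    rw [h, show qv * tv⁻¹ * (tv * qv⁻¹ * χ j) = (qv * qv⁻¹) * (tv⁻¹ * tv) * χ j by ring,
      mul_inv_cancel₀ qv_ne, inv_mul_cancel₀ tv_ne, one_mul, one_mul]
  have hB : ∀ i j, 1 - qv * tv⁻¹ * (χ j / χ i) ≠ 0 := by
    intro i j
    have h5 : (χ i - qv * tv⁻¹ * χ j) / χ i = 1 - qv * tv⁻¹ * (χ j / χ i) := by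
      rw [sub_div, div_self (hχ0 i), mul_div_assoc]
    rw [← h5]
    exact div_ne_zero (hg1 i j) (hχ0 i)
  have h1q : (1 : F0) - qv ≠ 0 := by
    intro h
    rw [sub_eq_zero] at h
    have : qv ^ (1:ℕ) * tv ^ (0:ℕ) = qv ^ (0:ℕ) * tv ^ (0:ℕ) := by
      simp [← h]
    obtain ⟨h1, -⟩ := mono_nat this
    omega
  have h1qt : (1 : F0) - qv * tv⁻¹ ≠ 0 := by
    intro h
    rw [sub_eq_zero] at h
    have hqt : tv = qv := by
      have h2 := congrArg (· * tv) h
      simpa [mul_assoc, tv_ne] using h2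
    have : qv ^ (0:ℕ) * tv ^ (1:ℕ) = qv ^ (1:ℕ) * tv ^ (0:ℕ) := by
      simp [hqt]
    obtain ⟨h1, -⟩ := mono_nat this
    omega
  -- the polynomials
  set f : MvPolynomial (Fin k) F0 := ∏ i : Fin k, ∏ j : Fin k,
    if i < j then (MvPolynomial.X i - MvPolynomial.C qv * MvPolynomial.X j) *
      (MvPolynomial.X i - MvPolynomial.C qv⁻¹ * MvPolynomial.X j) else 1 with hfdef
  set g : MvPolynomial (Fin k) F0 := ∏ i : Fin k, ∏ j : Fin k,
    if i < j then (MvPolynomial.X i - MvPolynomial.C qv * MvPolynomial.C tv⁻¹ *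
        MvPolynomial.X j) *
      (MvPolynomial.X i - MvPolynomial.C tv * MvPolynomial.C qv⁻¹ * MvPolynomial.X j)
    else 1 with hgdef
  have evalg : ∀ v : Fin k → F0, MvPolynomial.eval v g = Eden k v := by
    intro v
    rw [hgdef, Eden, map_prod]
    refine Finset.prod_congr rfl fun i _ => ?_
    rw [map_prod]
    refine Finset.prod_congr rfl fun j _ => ?_
    split_ifs <;>
      simp only [map_mul, map_sub, map_one, MvPolynomial.eval_X, MvPolynomial.eval_C]
  have evalf : ∀ v : Fin k → F0, MvPolynomial.eval v f
      = ∏ i : Fin k, ∏ j : Fin k,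
          if i < j then (v i - qv * v j) * (v i - qv⁻¹ * v j) else 1 := by
    intro v
    rw [hfdef, map_prod]
    refine Finset.prod_congr rfl fun i _ => ?_
    rw [map_prod]
    refine Finset.prod_congr rfl fun j _ => ?_
    split_ifs <;>
      simp only [map_mul, map_sub, map_one, MvPolynomial.eval_X, MvPolynomial.eval_C]
  refine ⟨f, g, ?_, ?_, ?_⟩
  · -- regularity
    intro v hv
    have hd : ∀ i j : Fin k, i < j → (v i - qv * tv⁻¹ * v j) * (v i - tv * qv⁻¹ * v j) ≠ 0 := by
      intro i j hij
      rw [Eden, Finset.prod_ne_zero_iff] at hv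
      have h1 := hv i (Finset.mem_univ i)
      rw [Finset.prod_ne_zero_iff] at h1
      have h2 := h1 j (Finset.mem_univ j)
      simpa [hij] using h2
    rw [evalg v, evalf v, Eval', Eden, ← Finset.prod_mul_distrib]
    refine Finset.prod_congr rfl fun i _ => ?_
    rw [← Finset.prod_mul_distrib]
    refine Finset.prod_congr rfl fun j _ => ?_
    split_ifs with h
    · exact div_mul_cancel₀ _ (hd i j h)
    · simp
  · -- nonvanishing at χ
    rw [evalg χ, Eden]
    rw [Finset.prod_ne_zero_iff]
    intro i _
    rw [Finset.prod_ne_zero_iff]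
    intro j _
    split_ifs with h
    · exact mul_ne_zero (hg1 i j) (hg2 i j)
    · exact one_ne_zero
  · -- the value
    rw [evalg χ, evalf χ, Eden, ← Finset.prod_div_distrib]
    have step2 : (∏ i : Fin k, (∏ j : Fin k,
          if i < j then (χ i - qv * χ j) * (χ i - qv⁻¹ * χ j) else 1) /
          ∏ j : Fin k, if i < j then (χ i - qv * tv⁻¹ * χ j) * (χ i - tv * qv⁻¹ * χ j) else 1)
        = ∏ i : Fin k, ∏ j : Fin k, (if i < j then
            tv⁻¹ * ((1 - qv * (χ j / χ i)) / (1 - qv * tv⁻¹ * (χ j / χ i)) *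
              ((1 - qv * (χ i / χ j)) / (1 - qv * tv⁻¹ * (χ i / χ j)))) else 1) := by
      refine Finset.prod_congr rfl fun i _ => ?_
      rw [← Finset.prod_div_distrib]
      refine Finset.prod_congr rfl fun j _ => ?_
      split_ifs with h
      · exact key_term qv tv (χ i) (χ j) qv_ne tv_ne (hχ0 i) (hχ0 j) (hg1 i j) (hg2 i j)
      · simp
    rw [step2]
    have step3 : (∏ i : Fin k, ∏ j : Fin k, (if i < j then
            tv⁻¹ * ((1 - qv * (χ j / χ i)) / (1 - qv * tv⁻¹ * (χ j / χ i)) *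
              ((1 - qv * (χ i / χ j)) / (1 - qv * tv⁻¹ * (χ i / χ j)))) else 1))
        = (∏ i : Fin k, ∏ j : Fin k, (if i < j then tv⁻¹ else 1)) *
          ∏ i : Fin k, ∏ j : Fin k, (if i < j then
            ((1 - qv * (χ j / χ i)) / (1 - qv * tv⁻¹ * (χ j / χ i)) *
              ((1 - qv * (χ i / χ j)) / (1 - qv * tv⁻¹ * (χ i / χ j)))) else 1) := by
      rw [← Finset.prod_mul_distrib]
      refine Finset.prod_congr rfl fun i _ => ?_
      rw [← Finset.prod_mul_distrib]
      refine Finset.prod_congr rfl fun j _ => ?_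
      split_ifs <;> simp
    rw [step3, prod_const_lt]
    -- now the right-hand side
    have hsq := prod_square (fun i j =>
      (1 - qv * (χ j / χ i)) / (1 - qv * tv⁻¹ * (χ j / χ i)))
    have hdiag : (∏ i : Fin k, (1 - qv * (χ i / χ i)) / (1 - qv * tv⁻¹ * (χ i / χ i)))
        = ((1 - qv) / (1 - qv * tv⁻¹)) ^ k := by
      calc (∏ i : Fin k, (1 - qv * (χ i / χ i)) / (1 - qv * tv⁻¹ * (χ i / χ i)))
          = ∏ _i : Fin k, ((1 - qv) / (1 - qv * tv⁻¹)) :=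
            Finset.prod_congr rfl fun i _ => by rw [div_self (hχ0 i), mul_one, mul_one]
        _ = ((1 - qv) / (1 - qv * tv⁻¹)) ^ k := by
            rw [Finset.prod_const, Finset.card_univ, Fintype.card_fin]
    rw [hsq, hdiag]
    have hcancel : (1 - qv * tv⁻¹) ^ k / (1 - qv) ^ k * ((1 - qv) / (1 - qv * tv⁻¹)) ^ k
        = 1 := by
      have hx := pow_ne_zero k h1qt
      have hy := pow_ne_zero k h1q
      rw [div_pow, div_mul_div_comm, div_eq_one_iff_eq (mul_ne_zero hy hx)]
      ring
    calc (tv⁻¹) ^ (k * (k - 1) / 2) *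
          ∏ i : Fin k, ∏ j : Fin k, (if i < j then
            ((1 - qv * (χ j / χ i)) / (1 - qv * tv⁻¹ * (χ j / χ i)) *
              ((1 - qv * (χ i / χ j)) / (1 - qv * tv⁻¹ * (χ i / χ j)))) else 1)
        = (tv ^ (k * (k - 1) / 2))⁻¹ *
          (((1 - qv * tv⁻¹) ^ k / (1 - qv) ^ k * ((1 - qv) / (1 - qv * tv⁻¹)) ^ k) *
          ∏ i : Fin k, ∏ j : Fin k, (if i < j then
            ((1 - qv * (χ j / χ i)) / (1 - qv * tv⁻¹ * (χ j / χ i)) *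
              ((1 - qv * (χ i / χ j)) / (1 - qv * tv⁻¹ * (χ i / χ j)))) else 1)) := by
          rw [hcancel, one_mul, inv_pow]
      _ = (tv ^ (k * (k - 1) / 2))⁻¹ * ((1 - qv * tv⁻¹) ^ k / (1 - qv) ^ k) *
          (((1 - qv) / (1 - qv * tv⁻¹)) ^ k *
          ∏ i : Fin k, ∏ j : Fin k, (if i < j then
            ((1 - qv * (χ j / χ i)) / (1 - qv * tv⁻¹ * (χ j / χ i)) *
              ((1 - qv * (χ i / χ j)) / (1 - qv * tv⁻¹ * (χ i / χ j)))) else 1)) := by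
          ring

end SkewEval
end
end
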